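/- arXiv:2410.01199 — 6 statements merged into one kernel-verified Lean document; each statement's English description precedes it below -/
import Mathlib

section
/- Let m ≥ 1 be a natural number and assume a ≠ 0 (so that L ≠ 0). For every real t, ∏_{j=0}^{2m−1} |cos_λ(t + jπ/(2m·L) : a)| = |sin_λ(2m·t : a)| / 2^{2m−1}. -/
/-!
Writing `|sin θ| = ‖1 - exp (2iθ)‖ / 2`, the product of `|sin (x + jπ/n)|` over `j < n` becomes
`‖∏ (1 - ζ ^ j u)‖ / 2 ^ n` with `u = exp (2ix)` and `ζ` a primitive `n`-th root of unity, and
`∏ (1 - ζ ^ j u) = 1 - u ^ n`. Since `cos y = sin (y + π/2)`, the same holds for `|cos|` when `n` is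
even. The degenerate functions are `cos` and `sin` rescaled by `L ≠ 0`, and the shift `jπ/(2mL)`
becomes `jπ/(2m)` after rescaling.
-/

open Real Finset

theorem IsPrimitiveRoot.prod_one_sub_pow_mul {R : Type*} [CommRing R] [IsDomain R] {ζ : R}
    {n : ℕ} (hn : 0 < n) (hζ : IsPrimitiveRoot ζ n) (u : R) :
    ∏ j ∈ range n, (1 - ζ ^ j * u) = 1 - u ^ n := by
  classical
  have hroots : Polynomial.nthRootsFinset n (1 : R) = (range n).image (ζ ^ ·) := by
    rw [Polynomial.nthRootsFinset_def, hζ.nthRoots_eq (one_pow n)]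
    simp [Multiset.toFinset_map]
  have h := hζ.pow_sub_pow_eq_prod_sub_mul 1 u hn
  rw [one_pow, hroots, prod_image hζ.injOn_pow] at h
  exact h.symm

theorem Complex.norm_one_sub_exp_I_mul_two_mul (θ : ℝ) :
    ‖1 - Complex.exp (Complex.I * ↑(2 * θ))‖ = 2 * |Real.sin θ| := by
  rw [norm_sub_rev, Complex.norm_exp_I_mul_ofReal_sub_one, mul_div_cancel_left₀ θ two_ne_zero,
    norm_mul, Real.norm_two, Real.norm_eq_abs]

theorem prod_abs_sin_add_mul_pi_div {n : ℕ} (hn : 0 < n) (x : ℝ) :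
    ∏ j ∈ range n, |sin (x + j * π / n)| = |sin (n * x)| / 2 ^ (n - 1) := by
  set ζ := Complex.exp (2 * π * Complex.I / n)
  set u := Complex.exp (Complex.I * ↑(2 * x))
  have hfactor (j : ℕ) : ‖1 - ζ ^ j * u‖ = 2 * |sin (x + j * π / n)| := by
    rw [← Complex.norm_one_sub_exp_I_mul_two_mul, ← Complex.exp_nat_mul, ← Complex.exp_add]
    congr 3
    push_cast
    ring
  have hpow : u ^ n = Complex.exp (Complex.I * ↑(2 * (n * x))) := by
    rw [← Complex.exp_nat_mul]
    congr 1
    push_cast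
    ring
  have key : 2 ^ n * ∏ j ∈ range n, |sin (x + j * π / n)| = 2 * |sin (n * x)| :=
    calc 2 ^ n * ∏ j ∈ range n, |sin (x + j * π / n)|
        = ∏ j ∈ range n, ‖1 - ζ ^ j * u‖ := by
          simp only [hfactor, prod_mul_distrib, prod_const, card_range]
      _ = ‖1 - u ^ n‖ := by
          rw [← norm_prod, (Complex.isPrimitiveRoot_exp n hn.ne').prod_one_sub_pow_mul hn]
      _ = 2 * |sin (n * x)| := by rw [hpow, Complex.norm_one_sub_exp_I_mul_two_mul]
  rw [← pow_sub_one_mul hn.ne'] at key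
  rw [eq_div_iff (by positivity)]
  linear_combination key / 2

theorem prod_abs_cos_add_mul_pi_div {n : ℕ} (hn : 0 < n) (hev : Even n) (x : ℝ) :
    ∏ j ∈ range n, |cos (x + j * π / n)| = |sin (n * x)| / 2 ^ (n - 1) := by
  obtain ⟨m, rfl⟩ := hev
  have hshift : ((m + m : ℕ) : ℝ) * (x + π / 2) = (m + m : ℕ) * x + m * π := by
    push_cast
    ring
  have hperiod : |sin ((m + m : ℕ) * x + m * π)| = |sin ((m + m : ℕ) * x)| := by
    rw [sin_add_nat_mul_pi, abs_mul, abs_pow, abs_neg, abs_one, one_pow, one_mul]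
  rw [← hperiod, ← hshift, ← prod_abs_sin_add_mul_pi_div hn]
  refine prod_congr rfl fun j _ => ?_
  rw [← sin_add_pi_div_two]
  ring_nf

theorem inv_mul_log_one_add_mul_ne_zero {lam a : ℝ} (hlam : lam ≠ 0) (ha : 0 < 1 + lam * a)
    (haz : a ≠ 0) : lam⁻¹ * log (1 + lam * a) ≠ 0 :=
  mul_ne_zero (inv_ne_zero hlam) (log_ne_zero_of_pos_of_ne_one ha (by simp [hlam, haz]))

/-- ∏_{j=0}^{2m−1} |cos_λ(t + jπ/(2m·L) : a)| = |sin_λ(2m·t : a)| / 2^(2m−1). -/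
theorem degenerate_prod_abs_cos (lam a : ℝ) (hlam : lam ≠ 0)
    (ha : 1 + lam * a > 0) (haz : a ≠ 0) (L : ℝ)
    (hL : L = lam⁻¹ * Real.log (1 + lam * a)) (m : ℕ) (hm : 1 ≤ m) (t : ℝ) :
    ∏ j ∈ Finset.range (2 * m), |Real.cos ((t + j * π / (2 * m * L)) * L)|
      = |Real.sin (2 * m * t * L)| / 2 ^ (2 * m - 1) := by
  have hL0 : L ≠ 0 := hL ▸ inv_mul_log_one_add_mul_ne_zero hlam ha haz
  have hscale : 2 * m * t * L = ((2 * m : ℕ) : ℝ) * (t * L) := by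
    push_cast
    ring
  rw [hscale, ← prod_abs_cos_add_mul_pi_div (by omega) (even_two_mul m)]
  refine prod_congr rfl fun j _ => ?_
  congr 2
  push_cast
  field_simp
end

section
/- Let m ≥ 1 be a natural number and assume a ≠ 0 (so that L ≠ 0). For every real t, ∏_{j=0}^{2m−1} |sin_λ(t + jπ/(2m·L) : a)| = |sin_λ(2m·t : a)| / 2^{2m−1}. -/
/-!
Since `2 |sin θ| = ‖1 - exp (2iθ)‖` and the numbers `exp (2i (x + jπ/n))`, `j < n`, are
`u = exp (2ix)` times the `n`-th roots of unity, the factorisation `1 - u^n = ∏ (1 - ζ^j u)`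
gives `2^n ∏ |sin (x + jπ/n)| = ‖1 - u^n‖ = 2 |sin (nx)|`. The degenerate case follows by
substituting `x = tL`, which turns the shifts `jπ/(2mL)` into `jπ/(2m)` because `L ≠ 0`.
-/

open Real Finset

theorem IsPrimitiveRoot.pow_sub_pow_eq_prod_range_sub_mul {R : Type*} [CommRing R] [IsDomain R]
    {ζ : R} {n : ℕ} (hζ : IsPrimitiveRoot ζ n) (hn : 0 < n) (x y : R) :
    x ^ n - y ^ n = ∏ j ∈ range n, (x - ζ ^ j * y) := by
  have : NeZero n := .of_pos hn
  rw [hζ.pow_sub_pow_eq_prod_sub_mul x y hn]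
  symm
  refine prod_nbij (ζ ^ ·) (fun j _ => ?_) (hζ.injOn_pow.mono fun j hj => ?_) (fun μ hμ => ?_)
    fun _ _ => rfl
  · rw [Polynomial.mem_nthRootsFinset hn, ← pow_mul, mul_comm, pow_mul, hζ.pow_eq_one, one_pow]
  · simpa using hj
  · obtain ⟨i, hi, rfl⟩ :=
      hζ.eq_pow_of_pow_eq_one ((Polynomial.mem_nthRootsFinset hn 1).1 hμ)
    exact ⟨i, by simpa using hi, rfl⟩

theorem Real.two_mul_abs_sin_eq_norm_one_sub_exp (θ : ℝ) :
    2 * |sin θ| = ‖1 - Complex.exp (Complex.I * ↑(2 * θ))‖ := by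
  rw [norm_sub_rev, Complex.norm_exp_I_mul_ofReal_sub_one, norm_mul, Real.norm_eq_abs,
    Real.norm_eq_abs]
  norm_num

theorem Real.prod_range_abs_sin_add_mul_pi_div (n : ℕ) (hn : 0 < n) (x : ℝ) :
    ∏ j ∈ range n, |sin (x + j * π / n)| = |sin (n * x)| / 2 ^ (n - 1) := by
  set u := Complex.exp (Complex.I * ↑(2 * x))
  set ζ := Complex.exp (2 * π * Complex.I / n)
  have hshift (j : ℕ) : Complex.exp (Complex.I * ↑(2 * (x + j * π / n))) = ζ ^ j * u := by
    rw [← Complex.exp_nat_mul, ← Complex.exp_add]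
    congr 1
    push_cast
    ring
  have hpow : u ^ n = Complex.exp (Complex.I * ↑(2 * (n * x))) := by
    rw [← Complex.exp_nat_mul]
    congr 1
    push_cast
    ring
  have key : 2 ^ n * ∏ j ∈ range n, |sin (x + j * π / n)| = 2 * |sin (n * x)| :=
    calc 2 ^ n * ∏ j ∈ range n, |sin (x + j * π / n)|
        = ∏ j ∈ range n, 2 * |sin (x + j * π / n)| := by
          rw [prod_mul_distrib, prod_const, card_range]
      _ = ‖∏ j ∈ range n, (1 - ζ ^ j * u)‖ := by
          simp only [two_mul_abs_sin_eq_norm_one_sub_exp, hshift, norm_prod]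
      _ = 2 * |sin (n * x)| := by
          rw [← (Complex.isPrimitiveRoot_exp n hn.ne').pow_sub_pow_eq_prod_range_sub_mul hn,
            one_pow, hpow, Real.two_mul_abs_sin_eq_norm_one_sub_exp]
  rw [← pow_sub_one_mul hn.ne'] at key
  rw [eq_div_iff (by positivity)]
  linear_combination key / 2

/-- ∏_{j=0}^{2m−1} |sin_λ(t + jπ/(2m·L) : a)| = |sin_λ(2m·t : a)| / 2^(2m−1). -/
theorem degenerate_prod_abs_sin (lam a : ℝ) (hlam : lam ≠ 0)
    (ha : 1 + lam * a > 0) (haz : a ≠ 0) (L : ℝ)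
    (hL : L = lam⁻¹ * Real.log (1 + lam * a)) (m : ℕ) (hm : 1 ≤ m) (t : ℝ) :
    ∏ j ∈ Finset.range (2 * m), |Real.sin ((t + j * π / (2 * m * L)) * L)|
      = |Real.sin (2 * m * t * L)| / 2 ^ (2 * m - 1) := by
  have hL0 : L ≠ 0 := by
    rw [hL]
    refine mul_ne_zero (inv_ne_zero hlam) (Real.log_ne_zero_of_pos_of_ne_one ha ?_)
    simpa using mul_ne_zero hlam haz
  have hshift (j : ℕ) : (t + j * π / (2 * m * L)) * L = t * L + j * π / ↑(2 * m) := by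
    push_cast
    field_simp
  simp_rw [hshift]
  rw [Real.prod_range_abs_sin_add_mul_pi_div (2 * m) (by omega)]
  push_cast
  ring_nf
end

section
/- Let m ≥ 1 be a natural number and assume a ≠ 0 (so that L ≠ 0). For every real t with sin_λ(2m·t : a) ≠ 0, we have −2m·cot_λ(2m·t : a) = Σ_{j=0}^{2m−1} tan_λ(t + jπ/(2m·L) : a). -/
open Real

/-! At `θ = tL` the identity is the classical `∑_{j<2m} tan (θ + jπ/2m) = -2m cot (2mθ)`.
As `tan x = -cot (x + π/2)` and `π/2` is `m` steps of `π/2m`, this follows from the cotangent sum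
`∑_{j<n} cot (θ + jπ/n) = n cot (nθ)`. In the variable `u = exp (2iθ)` the latter is the
partial-fraction identity `∑_{j<n} 1/(1 - u ω^j) = n/(1 - u^n)` for a primitive `n`-th root of
unity `ω`. -/

open Finset

theorem IsPrimitiveRoot.sum_pow_pow_eq_ite {K : Type*} [Field K] {ω : K} {n k : ℕ}
    (hω : IsPrimitiveRoot ω n) (hk : k < n) :
    ∑ j ∈ range n, (ω ^ k) ^ j = if k = 0 then (n : K) else 0 := by
  split_ifs with h0
  · simp [h0]
  · rw [geom_sum_eq (hω.pow_ne_one_of_pos_of_lt h0 hk), pow_right_comm, hω.pow_eq_one, one_pow,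
      sub_self, zero_div]

-- Expand each term as a geometric series in `u * ω ^ j`; summing over `j` kills every power
-- of `u` but the constant one.
theorem IsPrimitiveRoot.sum_inv_one_sub_mul_pow {K : Type*} [Field K] {ω u : K} {n : ℕ}
    (hω : IsPrimitiveRoot ω n) (hu : u ^ n ≠ 1) :
    ∑ j ∈ range n, (1 - u * ω ^ j)⁻¹ = n / (1 - u ^ n) := by
  have hn : 0 < n := Nat.pos_of_ne_zero fun h => hu (by rw [h, pow_zero])
  have hu' : 1 - u ^ n ≠ 0 := sub_ne_zero.mpr hu.symm
  have hterm (j : ℕ) :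
      (1 - u * ω ^ j)⁻¹ = (∑ k ∈ range n, u ^ k * (ω ^ k) ^ j) / (1 - u ^ n) := by
    have hgeom := mul_neg_geom_sum (u * ω ^ j) n
    rw [mul_pow, pow_right_comm, hω.pow_eq_one, one_pow, mul_one] at hgeom
    have hj : 1 - u * ω ^ j ≠ 0 := fun h => hu' (by rw [← hgeom, h, zero_mul])
    rw [eq_div_iff hu', ← hgeom, inv_mul_cancel_left₀ hj]
    exact sum_congr rfl fun k _ => by ring
  rw [sum_congr rfl fun j _ => hterm j, ← sum_div, sum_comm,
    sum_congr rfl fun k hk => by rw [← mul_sum, hω.sum_pow_pow_eq_ite (mem_range.mp hk)]]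
  simp [mul_ite, hn]

namespace Complex

theorem exp_two_mul_I_mul_ne_one {w : ℂ} (hw : sin w ≠ 0) : exp (2 * I * w) ≠ 1 := by
  rintro h
  obtain ⟨k, hk⟩ := exp_eq_one_iff.mp h
  refine hw (sin_eq_zero_iff.mpr ⟨k, ?_⟩)
  apply mul_left_cancel₀ (mul_ne_zero two_ne_zero I_ne_zero)
  linear_combination hk

theorem cot_eq_I_sub_of_exp_ne_one {w : ℂ} (hw : exp (2 * I * w) ≠ 1) :
    cot w = I - 2 * I * (1 - exp (2 * I * w))⁻¹ := by
  have : 1 - exp (2 * I * w) ≠ 0 := sub_ne_zero.mpr hw.symm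
  rw [cot_eq_exp_ratio]
  field_simp
  linear_combination (1 + exp (2 * I * w)) * I_sq

theorem sum_cot_add_mul_pi_div {n : ℕ} {z : ℂ} (hs : sin (n * z) ≠ 0) :
    ∑ j ∈ range n, cot (z + j * π / n) = n * cot (n * z) := by
  have hn : (n : ℂ) ≠ 0 := by rintro hn; simp [hn] at hs
  set u := exp (2 * I * z)
  set ω := exp (2 * π * I / n)
  have hω : IsPrimitiveRoot ω n := isPrimitiveRoot_exp n (by exact_mod_cast hn)
  have hexp_n : exp (2 * I * (n * z)) = u ^ n := by
    rw [← exp_nat_mul]; ring_nf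
  have hexp_j (j : ℕ) : exp (2 * I * (z + j * π / n)) = u * ω ^ j := by
    rw [← exp_nat_mul, ← exp_add]; field_simp
  have hu : u ^ n ≠ 1 := hexp_n ▸ exp_two_mul_I_mul_ne_one hs
  have huω (j : ℕ) : u * ω ^ j ≠ 1 := fun h => hu <| by
    have : u ^ n * (ω ^ j) ^ n = 1 := by rw [← mul_pow, h, one_pow]
    rwa [pow_right_comm, hω.pow_eq_one, one_pow, mul_one] at this
  rw [cot_eq_I_sub_of_exp_ne_one (hexp_n ▸ hu), hexp_n]
  simp_rw [cot_eq_I_sub_of_exp_ne_one (hexp_j _ ▸ huω _), hexp_j]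
  rw [sum_sub_distrib, ← mul_sum, hω.sum_inv_one_sub_mul_pow hu]
  simp only [sum_const, card_range, nsmul_eq_mul]
  ring

end Complex

namespace Real

theorem sum_cot_add_mul_pi_div {n : ℕ} {θ : ℝ} (hs : sin (n * θ) ≠ 0) :
    ∑ j ∈ range n, cot (θ + j * π / n) = n * cot (n * θ) := by
  apply Complex.ofReal_injective
  push_cast
  exact Complex.sum_cot_add_mul_pi_div (by exact_mod_cast hs)

theorem cot_add_pi_div_two (x : ℝ) : cot (x + π / 2) = -tan x := by
  rw [cot_eq_cos_div_sin, tan_eq_sin_div_cos, cos_add_pi_div_two, sin_add_pi_div_two, neg_div]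

theorem cot_add_nat_mul_pi (x : ℝ) (m : ℕ) : cot (x + m * π) = cot x := by
  rw [cot_eq_cos_div_sin, cot_eq_cos_div_sin, cos_add_nat_mul_pi, sin_add_nat_mul_pi,
    mul_div_mul_left _ _ (pow_ne_zero m (by norm_num))]

theorem sum_tan_add_mul_pi_div_two_mul {m : ℕ} {θ : ℝ} (hs : sin (2 * m * θ) ≠ 0) :
    ∑ j ∈ range (2 * m), tan (θ + j * π / (2 * m)) = -(2 * m * cot (2 * m * θ)) := by
  have hshift : 2 * m * (θ + π / 2) = 2 * m * θ + m * π := by ring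
  have hs' : sin (↑(2 * m) * (θ + π / 2)) ≠ 0 := by
    rw [Nat.cast_mul, Nat.cast_two, hshift, sin_add_nat_mul_pi]
    exact mul_ne_zero (pow_ne_zero m (by norm_num)) hs
  have hcot := sum_cot_add_mul_pi_div hs'
  push_cast at hcot
  rw [hshift, cot_add_nat_mul_pi] at hcot
  rw [← hcot, ← sum_neg_distrib]
  refine sum_congr rfl fun j _ => ?_
  rw [add_right_comm, cot_add_pi_div_two, neg_neg]

end Real

theorem degenerate_cot_multiple_angle_tan_general (L : ℝ) (m : ℕ) (t : ℝ)
    (hs : Real.sin (2 * m * t * L) ≠ 0) :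
    -(2 * m * (Real.cos (2 * m * t * L) / Real.sin (2 * m * t * L)))
      = ∑ j ∈ Finset.range (2 * m),
          Real.sin ((t + j * π / (2 * m * L)) * L) / Real.cos ((t + j * π / (2 * m * L)) * L) := by
  have hL : L ≠ 0 := by rintro rfl; simp at hs
  have hm : (m : ℝ) ≠ 0 := by intro hm; rw [hm] at hs; simp at hs
  have hangle (j : ℕ) : (t + j * π / (2 * m * L)) * L = t * L + j * π / (2 * m) := by
    field_simp
  have htan := sum_tan_add_mul_pi_div_two_mul (θ := t * L) (by rwa [← mul_assoc])
  rw [← mul_assoc] at htan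
  simp_rw [hangle, ← tan_eq_sin_div_cos, ← cot_eq_cos_div_sin, htan]

/-- −2m·cot_λ(2m·t : a) = Σ_{j=0}^{2m−1} tan_λ(t + jπ/(2m·L) : a),
where tan_λ(x:a) = sin(x·L)/cos(x·L) and cot_λ(x:a) = cos(x·L)/sin(x·L). -/
theorem degenerate_cot_multiple_angle_tan (lam a : ℝ) (hlam : lam ≠ 0)
    (ha : 1 + lam * a > 0) (haz : a ≠ 0) (L : ℝ)
    (hL : L = lam⁻¹ * Real.log (1 + lam * a)) (m : ℕ) (hm : 1 ≤ m) (t : ℝ)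
    (hs : Real.sin (2 * m * t * L) ≠ 0) :
    -(2 * m * (Real.cos (2 * m * t * L) / Real.sin (2 * m * t * L)))
      = ∑ j ∈ Finset.range (2 * m),
          Real.sin ((t + j * π / (2 * m * L)) * L) / Real.cos ((t + j * π / (2 * m * L)) * L) :=
  degenerate_cot_multiple_angle_tan_general L m t hs
end

section
/- Let m ≥ 1 be a natural number and assume a ≠ 0 (so that L ≠ 0). For every real t with sin_λ(2m·t : a) ≠ 0, we have 2m·cot_λ(2m·t : a) = Σ_{j=0}^{2m−1} cot_λ(t + jπ/(2m·L) : a). -/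
open Real

private lemma sin_ne_zero_iff_exp' (w : ℂ) :
    Complex.sin w ≠ 0 ↔ Complex.exp (2 * Complex.I * w) ≠ 1 := by
  rw [not_iff_not, Complex.sin_eq_zero_iff, Complex.exp_eq_one_iff]
  constructor
  · rintro ⟨k, hk⟩; exact ⟨k, by rw [hk]; ring⟩
  · rintro ⟨k, hk⟩
    have hI : (2 * Complex.I) ≠ 0 := by simp [Complex.I_ne_zero]
    refine ⟨k, mul_left_cancel₀ hI ?_⟩
    rw [hk]; ring

private lemma cot_complex' (w : ℂ) (h : Complex.exp (2 * Complex.I * w) ≠ 1) :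
    Complex.cos w / Complex.sin w
      = Complex.I * (Complex.exp (2 * Complex.I * w) + 1) / (Complex.exp (2 * Complex.I * w) - 1) := by
  have hrat := Complex.cot_eq_exp_ratio w
  rw [Complex.cot] at hrat
  have h1 : Complex.exp (2 * Complex.I * w) - 1 ≠ 0 := sub_ne_zero.mpr h
  have h2 : Complex.I * (1 - Complex.exp (2 * Complex.I * w)) ≠ 0 := by
    apply mul_ne_zero Complex.I_ne_zero
    intro hc
    exact h (sub_eq_zero.mp hc).symm
  rw [hrat, div_eq_div_iff h2 h1]
  linear_combination (Complex.exp (2*Complex.I*w) ^ 2 - 1) * Complex.I_sq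

private lemma roots_sum (n : ℕ) (hn : n ≠ 0) (z : ℂ) (hz : z ^ n ≠ 1) :
    ∑ j ∈ Finset.range n, 1 / (z * Complex.exp (2 * Real.pi * Complex.I / n) ^ j - 1)
      = n / (z ^ n - 1) := by
  set ζ : ℂ := Complex.exp (2 * Real.pi * Complex.I / n) with hζdef
  have hprim : IsPrimitiveRoot ζ n := Complex.isPrimitiveRoot_exp n hn
  have hζn : ζ ^ n = 1 := hprim.pow_eq_one
  have hpow : ∀ j : ℕ, (z * ζ ^ j) ^ n = z ^ n := by
    intro j
    rw [mul_pow, ← pow_mul, mul_comm j n, pow_mul, hζn, one_pow, mul_one]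
  have hne : ∀ j : ℕ, z * ζ ^ j - 1 ≠ 0 := by
    intro j hc
    apply hz
    rw [← hpow j, sub_eq_zero.mp hc, one_pow]
  have hzn : z ^ n - 1 ≠ 0 := sub_ne_zero.mpr hz
  have expand : ∀ j ∈ Finset.range n,
      (z ^ n - 1) * (1 / (z * ζ ^ j - 1)) = ∑ k ∈ Finset.range n, z ^ k * (ζ ^ k) ^ j := by
    intro j _
    rw [mul_one_div, div_eq_iff (hne j)]
    have hgeo := geom_sum_mul (z * ζ ^ j) n
    rw [hpow j] at hgeo
    rw [← hgeo]
    congr 1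
    apply Finset.sum_congr rfl
    intro k _
    rw [mul_pow, ← pow_mul, ← pow_mul, mul_comm j k]
  have key : ∑ j ∈ Finset.range n, (z ^ n - 1) * (1 / (z * ζ ^ j - 1)) = n := by
    rw [Finset.sum_congr rfl expand, Finset.sum_comm]
    rw [Finset.sum_eq_single 0]
    · simp
    · intro k hk hk0
      have hk' : 0 < k := Nat.pos_of_ne_zero hk0
      have hkn : k < n := Finset.mem_range.mp hk
      have hζk : ζ ^ k ≠ 1 := hprim.pow_ne_one_of_pos_of_lt hk0 hkn
      have h0 : (∑ j ∈ Finset.range n, (ζ ^ k) ^ j) * (ζ ^ k - 1) = 0 := by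
        rw [geom_sum_mul, ← pow_mul, mul_comm k n, pow_mul, hζn, one_pow, sub_self]
      have hsum : ∑ j ∈ Finset.range n, (ζ ^ k) ^ j = 0 := by
        rcases mul_eq_zero.mp h0 with h | h
        · exact h
        · exact absurd (sub_eq_zero.mp h) hζk
      rw [← Finset.mul_sum, hsum, mul_zero]
    · intro h; simp at h; omega
  rw [← Finset.mul_sum] at key
  rw [eq_div_iff hzn]
  linear_combination key

private lemma cot_sum_real (n : ℕ) (hn : n ≠ 0) (θ : ℝ)
    (hs : Real.sin (n * θ) ≠ 0) :
    (n : ℝ) * (Real.cos (n * θ) / Real.sin (n * θ))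
      = ∑ j ∈ Finset.range n, Real.cos (θ + j * Real.pi / n) / Real.sin (θ + j * Real.pi / n) := by
  set ζ : ℂ := Complex.exp (2 * Real.pi * Complex.I / n) with hζdef
  set z : ℂ := Complex.exp (2 * Complex.I * θ) with hzdef
  have hncast : (n : ℂ) ≠ 0 := Nat.cast_ne_zero.mpr hn
  have hzn : z ^ n = Complex.exp (2 * Complex.I * ((n * θ : ℝ) : ℂ)) := by
    rw [hzdef, ← Complex.exp_nat_mul]
    congr 1; push_cast; ring
  have hzj : ∀ j : ℕ, z * ζ ^ j = Complex.exp (2 * Complex.I * ((θ + j * Real.pi / n : ℝ) : ℂ)) := by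
    intro j
    rw [hzdef, hζdef, ← Complex.exp_nat_mul, ← Complex.exp_add]
    congr 1; push_cast; field_simp
  have hsC : Complex.sin ((n * θ : ℝ) : ℂ) ≠ 0 := by
    rw [← Complex.ofReal_sin]
    exact Complex.ofReal_ne_zero.mpr hs
  have hznne : z ^ n ≠ 1 := by
    rw [hzn]
    exact (sin_ne_zero_iff_exp' _).mp hsC
  have hζn : ζ ^ n = 1 := (Complex.isPrimitiveRoot_exp n hn).pow_eq_one
  have hzjne : ∀ j : ℕ, z * ζ ^ j ≠ 1 := by
    intro j hc
    apply hznne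
    have hp : (z * ζ ^ j) ^ n = z ^ n := by
      rw [mul_pow, ← pow_mul, mul_comm j n, pow_mul, hζn, one_pow, mul_one]
    rw [← hp, hc, one_pow]
  have hexpj : ∀ j : ℕ, Complex.exp (2 * Complex.I * ((θ + j * Real.pi / n : ℝ) : ℂ)) ≠ 1 := by
    intro j; rw [← hzj j]; exact hzjne j
  have main : (n : ℂ) * (Complex.cos ((n * θ : ℝ) : ℂ) / Complex.sin ((n * θ : ℝ) : ℂ))
      = ∑ j ∈ Finset.range n,
          Complex.cos ((θ + j * Real.pi / n : ℝ) : ℂ) / Complex.sin ((θ + j * Real.pi / n : ℝ) : ℂ) := by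
    rw [cot_complex' _ (by rw [← hzn]; exact hznne)]
    have hterm : ∀ j ∈ Finset.range n,
        Complex.cos ((θ + j * Real.pi / n : ℝ) : ℂ) / Complex.sin ((θ + j * Real.pi / n : ℝ) : ℂ)
          = Complex.I * (1 + 2 * (1 / (z * ζ ^ j - 1))) := by
      intro j _
      rw [cot_complex' _ (hexpj j), ← hzj j]
      have h1 : z * ζ ^ j - 1 ≠ 0 := sub_ne_zero.mpr (hzjne j)
      field_simp
      ring
    rw [Finset.sum_congr rfl hterm]
    have hrs := roots_sum n hn z hznne
    rw [← hζdef] at hrs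
    have hzn1 : z ^ n - 1 ≠ 0 := sub_ne_zero.mpr hznne
    rw [← hzn]
    have hdist : ∑ j ∈ Finset.range n, Complex.I * (1 + 2 * (1 / (z * ζ ^ j - 1)))
        = Complex.I * (n : ℂ) + 2 * Complex.I * ∑ j ∈ Finset.range n, 1 / (z * ζ ^ j - 1) := by
      simp only [mul_add, mul_one, Finset.sum_add_distrib, Finset.sum_const, Finset.card_range,
        nsmul_eq_mul, ← Finset.mul_sum]
      ring
    rw [hdist, hrs]
    field_simp
    ring
  apply Complex.ofReal_injective
  push_cast at main ⊢
  exact main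

/-- 2m·cot_λ(2m·t : a) = Σ_{j=0}^{2m−1} cot_λ(t + jπ/(2m·L) : a),
where cot_λ(x:a) = cos(x·L)/sin(x·L). -/
theorem degenerate_cot_multiple_angle_cot (lam a : ℝ) (hlam : lam ≠ 0)
    (ha : 1 + lam * a > 0) (haz : a ≠ 0) (L : ℝ)
    (hL : L = lam⁻¹ * Real.log (1 + lam * a)) (m : ℕ) (hm : 1 ≤ m) (t : ℝ)
    (hs : Real.sin (2 * m * t * L) ≠ 0) :
    2 * m * (Real.cos (2 * m * t * L) / Real.sin (2 * m * t * L))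
      = ∑ j ∈ Finset.range (2 * m),
          Real.cos ((t + j * π / (2 * m * L)) * L) / Real.sin ((t + j * π / (2 * m * L)) * L) := by
  have hL0 : L ≠ 0 := by
    rw [hL]
    apply mul_ne_zero (inv_ne_zero hlam)
    intro h
    have hla : lam * a ≠ 0 := mul_ne_zero hlam haz
    rcases Real.log_eq_zero.mp h with h | h | h
    · linarith
    · exact hla (by linarith)
    · linarith
  have hn : 2 * m ≠ 0 := by omega
  have hkey := cot_sum_real (2 * m) hn (t * L) (by
    have : ((2 * m : ℕ) : ℝ) * (t * L) = 2 * m * t * L := by push_cast; ring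
    rw [this]; exact hs)
  have h1 : ((2 * m : ℕ) : ℝ) * (t * L) = 2 * m * t * L := by push_cast; ring
  rw [h1] at hkey
  have h2 : ∀ j ∈ Finset.range (2 * m),
      Real.cos ((t + j * π / (2 * m * L)) * L) / Real.sin ((t + j * π / (2 * m * L)) * L)
        = Real.cos (t * L + j * π / ((2 * m : ℕ) : ℝ)) / Real.sin (t * L + j * π / ((2 * m : ℕ) : ℝ)) := by
    intro j _
    have he : (t + j * π / (2 * m * L)) * L = t * L + j * π / ((2 * m : ℕ) : ℝ) := by
      have hm0 : (2 * (m : ℝ)) ≠ 0 := by positivity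
      push_cast
      field_simp
    rw [he]
  rw [Finset.sum_congr rfl h2]
  rw [← hkey]
  push_cast
  ring
end

section
/- For every natural number m and every real x, sin_λ((2m+1)·x : a) = sin_λ(x : a)·(1 + 2·Σ_{k=1}^{m} T_k(1 − 2·sin_λ(x : a)²)), where T_k is the k-th Chebyshev polynomial of the first kind. -/
lemma aux_sin_odd (m : ℕ) (t : ℝ) :
    Real.sin ((2 * m + 1) * t)
      = Real.sin t * (1 + 2 * ∑ k ∈ Finset.Icc 1 m, Real.cos (2 * k * t)) := by
  induction m with
  | zero => simp
  | succ n ih =>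
    rw [Finset.sum_Icc_succ_top (by omega : 1 ≤ n + 1)]
    have key : Real.sin ((2 * (n+1) + 1) * t) - Real.sin ((2 * n + 1) * t)
        = 2 * Real.sin t * Real.cos (2 * (n+1) * t) := by
      rw [Real.sin_sub_sin]
      ring_nf
    push_cast at key ⊢
    nlinarith [key, ih]

/-- sin_λ((2m+1)·x : a) = sin_λ(x : a)·(1 + 2·Σ_{k=1}^{m} T_k(1 − 2·sin_λ(x:a)²)). -/
theorem degenerate_sin_odd_multiple (lam a : ℝ) (hlam : lam ≠ 0)
    (ha : 1 + lam * a > 0) (L : ℝ) (hL : L = lam⁻¹ * Real.log (1 + lam * a))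
    (m : ℕ) (x : ℝ) :
    Real.sin ((2 * m + 1) * x * L)
      = Real.sin (x * L) * (1 + 2 * ∑ k ∈ Finset.Icc 1 m,
          (Polynomial.Chebyshev.T ℝ k).eval (1 - 2 * Real.sin (x * L) ^ 2)) := by
  have hcos : 1 - 2 * Real.sin (x * L) ^ 2 = Real.cos (2 * (x * L)) := by
    rw [Real.cos_two_mul', Real.cos_sq']; ring
  rw [hcos]
  have heval : ∀ k ∈ Finset.Icc 1 m,
      (Polynomial.Chebyshev.T ℝ k).eval (Real.cos (2 * (x * L)))
        = Real.cos (2 * k * (x * L)) := by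
    intro k _
    have := Polynomial.Chebyshev.T_real_cos (2 * (x * L)) k
    push_cast at this
    rw [this]; ring_nf
  rw [Finset.sum_congr rfl heval]
  have := aux_sin_odd m (x * L)
  rw [← this]; ring_nf
end

section
/- For every natural number m ≥ 1 and every real x, sin_λ((2m+1)·x : a) = (2m+1)·sin_λ(x : a)·∏_{k=1}^{m} (1 − sin_λ(x : a)² / sin²(kπ/(2m+1))). -/
/-!
Write n = 2m + 1, ζ = exp(2πi/n) and w = exp(2iz). Factor wⁿ - 1 = ∏_{k<n} (w - ζᵏ) and pair the
roots ζᵏ and ζⁿ⁻ᵏ = ζ⁻ᵏ: each pair contributes 4w (sin²(kπ/n) - sin² z), while wⁿ - 1 and w - 1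
are 2i sin(nz) and 2i sin z times exponentials. This gives
sin(nz) = sin z · ∏_{k=1}^{m} 4 (sin²(kπ/n) - sin² z), and the same pairing applied to
∏_{k=1}^{n-1} (1 - ζᵏ) = n evaluates the constant ∏_{k=1}^{m} 4 sin²(kπ/n) = n.
-/

open Real Finset Polynomial

theorem Finset.prod_range_two_mul_succ_eq_prod_Icc {M : Type*} [CommMonoid M] (m : ℕ)
    (f : ℕ → M) :
    ∏ k ∈ range (2 * m), f (k + 1) = ∏ k ∈ Icc 1 m, f k * f (2 * m + 1 - k) := by
  rw [two_mul, prod_range_add, ← prod_range_reflect (fun k => f (m + k + 1)), ← prod_mul_distrib]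
  refine prod_nbij' (· + 1) (· - 1) ?_ ?_ ?_ ?_ fun k hk => ?_ <;> grind

namespace IsPrimitiveRoot

variable {R : Type*} [CommRing R] [IsDomain R] {m : ℕ} {ζ : R}

theorem pow_sub_one_eq_sub_one_mul_prod_pairs (hζ : IsPrimitiveRoot ζ (2 * m + 1)) (w : R) :
    w ^ (2 * m + 1) - 1
      = (w - 1) * ∏ k ∈ Icc 1 m, (w - ζ ^ k) * (w - ζ ^ (2 * m + 1 - k)) := by
  have h := congrArg (eval w) (X_pow_sub_C_eq_prod hζ (by omega) (one_pow _))
  rw [prod_range_succ', prod_range_two_mul_succ_eq_prod_Icc m (fun k => X - C (ζ ^ k * 1))] at h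
  simpa [eval_prod, mul_comm] using h

theorem prod_pairs_one_sub_pow_eq_order (hζ : IsPrimitiveRoot ζ (2 * m + 1)) :
    ∏ k ∈ Icc 1 m, (1 - ζ ^ k) * (1 - ζ ^ (2 * m + 1 - k)) = 2 * m + 1 := by
  rw [← prod_range_two_mul_succ_eq_prod_Icc m (fun k => 1 - ζ ^ k)]
  exact_mod_cast hζ.prod_one_sub_pow_eq_order

end IsPrimitiveRoot

namespace Complex

theorem exp_two_mul_mul_I_sub_one (z : ℂ) :
    exp (2 * z * I) - 1 = 2 * I * sin z * exp (z * I) := by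
  have h : exp (-z * I) * exp (z * I) = 1 := by rw [← exp_add]; simp
  have h2 : exp (2 * z * I) = exp (z * I) ^ 2 := by rw [← exp_nat_mul]; ring_nf
  have := two_sin z
  linear_combination h2 - I * exp (z * I) * this + h
    - exp (z * I) * (exp (-z * I) - exp (z * I)) * I_sq

theorem exp_two_mul_mul_I_add_exp_neg (z : ℂ) :
    exp (2 * z * I) + exp (-(2 * z * I)) = 2 - 4 * sin z ^ 2 := by
  rw [← neg_mul, ← two_cos, cos_two_mul_eq_one_sub]
  ring

theorem exp_two_mul_mul_I_sub_mul_sub (z c : ℂ) :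
    (exp (2 * z * I) - exp (2 * c * I)) * (exp (2 * z * I) - exp (-(2 * c * I)))
      = 4 * (sin c ^ 2 - sin z ^ 2) * exp (2 * z * I) := by
  have hz : exp (2 * z * I) * exp (-(2 * z * I)) = 1 := by rw [← exp_add]; simp
  have hc : exp (2 * c * I) * exp (-(2 * c * I)) = 1 := by rw [← exp_add]; simp
  linear_combination exp (2 * z * I) * exp_two_mul_mul_I_add_exp_neg z
    - exp (2 * z * I) * exp_two_mul_mul_I_add_exp_neg c + hc - hz

theorem exp_two_mul_mul_I_sub_mul_sub_rootOfUnity {n k : ℕ} (hn : n ≠ 0) (hk : k ≤ n) (z : ℂ) :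
    (exp (2 * z * I) - exp (2 * π * I / n) ^ k) * (exp (2 * z * I) - exp (2 * π * I / n) ^ (n - k))
      = 4 * (sin (k * π / n) ^ 2 - sin z ^ 2) * exp (2 * z * I) := by
  have hpow : exp (2 * π * I / n) ^ k = exp (2 * (k * π / n) * I) := by
    rw [← exp_nat_mul]; ring_nf
  rw [pow_sub₀ _ (exp_ne_zero _) hk, (isPrimitiveRoot_exp n hn).pow_eq_one, one_mul, hpow,
    ← exp_neg, exp_two_mul_mul_I_sub_mul_sub]

theorem prod_four_mul_sin_sq_pi_div (m : ℕ) :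
    ∏ k ∈ Icc 1 m, 4 * sin (k * π / (2 * m + 1)) ^ 2 = (2 * m + 1 : ℂ) := by
  have hn : 2 * m + 1 ≠ 0 := by omega
  refine .trans (prod_congr rfl fun k hk => ?_)
    (isPrimitiveRoot_exp _ hn).prod_pairs_one_sub_pow_eq_order
  have h :=
    exp_two_mul_mul_I_sub_mul_sub_rootOfUnity hn (k := k) (by rw [mem_Icc] at hk; omega) 0
  simp only [mul_zero, zero_mul, exp_zero, sin_zero] at h
  push_cast at h ⊢
  linear_combination -h

theorem sin_two_mul_add_one_mul_eq_prod (m : ℕ) (z : ℂ) :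
    sin ((2 * m + 1) * z)
      = sin z * ∏ k ∈ Icc 1 m, 4 * (sin (k * π / (2 * m + 1)) ^ 2 - sin z ^ 2) := by
  set P := ∏ k ∈ Icc 1 m, 4 * (sin (k * π / (2 * m + 1)) ^ 2 - sin z ^ 2)
  have hn : 2 * m + 1 ≠ 0 := by omega
  have h := (isPrimitiveRoot_exp _ hn).pow_sub_one_eq_sub_one_mul_prod_pairs (exp (2 * z * I))
  rw [prod_congr rfl fun k hk => exp_two_mul_mul_I_sub_mul_sub_rootOfUnity hn
      (by rw [mem_Icc] at hk; omega) z, prod_mul_distrib, prod_const, Nat.card_Icc,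
    add_tsub_cancel_right, ← exp_nat_mul, ← exp_nat_mul] at h
  push_cast at h
  rw [show (2 * m + 1) * (2 * z * I) = 2 * ((2 * m + 1) * z) * I by ring,
    exp_two_mul_mul_I_sub_one, exp_two_mul_mul_I_sub_one] at h
  have hexp : exp (z * I) * exp (m * (2 * z * I)) = exp ((2 * m + 1) * z * I) := by
    rw [← exp_add]; ring_nf
  have hne : 2 * I * exp ((2 * m + 1) * z * I) ≠ 0 :=
    mul_ne_zero (mul_ne_zero two_ne_zero I_ne_zero) (exp_ne_zero _)
  refine mul_left_cancel₀ hne ?_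
  linear_combination h + 2 * I * sin z * P * hexp

end Complex

namespace Real

theorem sin_nat_mul_pi_div_pos {k n : ℕ} (hk : 0 < k) (hkn : k < n) : 0 < sin (k * π / n) := by
  have hkn' : (k : ℝ) < n := by exact_mod_cast hkn
  apply sin_pos_of_pos_of_lt_pi
  · have : (0 : ℝ) < k := by exact_mod_cast hk
    exact div_pos (mul_pos this pi_pos) (by linarith)
  · rw [div_lt_iff₀ (by linarith), mul_comm]
    exact mul_lt_mul_of_pos_left hkn' pi_pos

theorem sin_two_mul_add_one_mul_eq_mul_prod (m : ℕ) (θ : ℝ) :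
    sin ((2 * m + 1) * θ)
      = (2 * m + 1) * sin θ * ∏ k ∈ Icc 1 m, (1 - sin θ ^ 2 / sin (k * π / (2 * m + 1)) ^ 2) := by
  have hconst : ∏ k ∈ Icc 1 m, 4 * sin (k * π / (2 * m + 1)) ^ 2 = (2 * m + 1 : ℝ) := by
    exact_mod_cast Complex.prod_four_mul_sin_sq_pi_div m
  calc sin ((2 * m + 1) * θ)
      = sin θ * ∏ k ∈ Icc 1 m, 4 * (sin (k * π / (2 * m + 1)) ^ 2 - sin θ ^ 2) := by
        exact_mod_cast Complex.sin_two_mul_add_one_mul_eq_prod m θ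
    _ = sin θ * ∏ k ∈ Icc 1 m,
          4 * sin (k * π / (2 * m + 1)) ^ 2 * (1 - sin θ ^ 2 / sin (k * π / (2 * m + 1)) ^ 2) := by
        refine congrArg _ (prod_congr rfl fun k hk => ?_)
        rw [mem_Icc] at hk
        have hk_pos := sin_nat_mul_pi_div_pos (k := k) (n := 2 * m + 1) (by omega) (by omega)
        push_cast at hk_pos
        field_simp
    _ = _ := by rw [prod_mul_distrib, hconst]; ring

end Real

theorem degenerate_sin_odd_multiple_product_general (L : ℝ)
    (m : ℕ) (x : ℝ) :
    Real.sin ((2 * m + 1) * x * L)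
      = (2 * m + 1) * Real.sin (x * L) * ∏ k ∈ Finset.Icc 1 m,
          (1 - Real.sin (x * L) ^ 2 / Real.sin (k * π / (2 * m + 1)) ^ 2) := by
  rw [mul_assoc, Real.sin_two_mul_add_one_mul_eq_mul_prod]

/-- sin_λ((2m+1)·x : a)
= (2m+1)·sin_λ(x : a)·∏_{k=1}^{m} (1 − sin_λ(x : a)² / sin²(kπ/(2m+1))). -/
theorem degenerate_sin_odd_multiple_product (lam a : ℝ) (hlam : lam ≠ 0)
    (ha : 1 + lam * a > 0) (L : ℝ) (hL : L = lam⁻¹ * Real.log (1 + lam * a))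
    (m : ℕ) (hm : 1 ≤ m) (x : ℝ) :
    Real.sin ((2 * m + 1) * x * L)
      = (2 * m + 1) * Real.sin (x * L) * ∏ k ∈ Finset.Icc 1 m,
          (1 - Real.sin (x * L) ^ 2 / Real.sin (k * π / (2 * m + 1)) ^ 2) :=
  degenerate_sin_odd_multiple_product_general L m x
end
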